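/- For every z ∈ ℝⁿ and every t > 0 there exists a centered ellipsoid E = T(B₂ⁿ), with T an invertible linear map of ℝⁿ, such that z + t·B₂ⁿ ⊆ E ⊆ conv((2z + 2√2·t·B₂ⁿ) ∪ (−2z + 2√2·t·B₂ⁿ)). -/

import Mathlib

open MeasureTheory Metric
open scoped NNReal ENNReal Pointwise

noncomputable section

variable {E : Type*} [NormedAddCommGroup E] [InnerProductSpace ℝ E]

/-- Radial function of a set. -/
def radFn (K : Set E) (x : E) : ℝ := sSup {a : ℝ | 0 ≤ a ∧ a • x ∈ K}

/-- A star body: compact, origin interior, continuous radial function off 0. -/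
def IsStarBody (K : Set E) : Prop :=
  IsCompact K ∧ 0 ∈ interior K ∧ ContinuousOn (radFn K) {x : E | x ≠ 0}

/-- Symmetric convex body. -/
def IsSymmConvexBody (K : Set E) : Prop :=
  IsCompact K ∧ Convex ℝ K ∧ (interior K).Nonempty ∧ K = -K

/-- `D` is the k-intersection body of `K`. -/
def IsKIntBody (n k : ℕ) (D K : Set (EuclideanSpace ℝ (Fin n))) : Prop :=
  ∀ F : Submodule ℝ (EuclideanSpace ℝ (Fin n)), Module.finrank ℝ F = k →
    μH[(k : ℝ)] (D ∩ (F : Set (EuclideanSpace ℝ (Fin n)))) =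
      μH[((n - k : ℕ) : ℝ)] (K ∩ ((Fᗮ : Submodule ℝ (EuclideanSpace ℝ (Fin n))) : Set (EuclideanSpace ℝ (Fin n))))

/-- Geometric distance between two bodies. -/
def geomDist (K₁ K₂ : Set E) : ℝ :=
  sInf {r : ℝ | 0 < r ∧ ∃ a : ℝ, 0 < a ∧ K₁ ⊆ a • K₂ ∧ a • K₂ ⊆ (r * a) • K₁}

/-- Banach–Mazur distance. -/
def banachMazur (K₁ K₂ : Set E) : ℝ :=
  sInf {d : ℝ | ∃ T : E ≃ₗ[ℝ] E, d = geomDist K₁ (T '' K₂)}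

/-!
Take the ellipsoid with semi-axis `a = √(2(‖z‖² + t²))` along `z` and `b = √2 t` on `zᗮ`, the
image of the unit ball under `b • 1 + (2 / (a + b)) • z ⊗ z`. A point `y` lies in it iff
`a²‖y‖² - 2⟪z, y⟫² ≤ a²b²`, and for `y = z + v` with `‖v‖ ≤ t` the slack in this inequality is at
least `2(t² - ⟪z, v⟫)²`. Conversely the image `T u` of a point of the unit ball lies within
distance `b` of the point `(2⟪z, u⟫ / a) • z` of the segment `[-2z, 2z]`, and the convex hull of
the balls of radius `b` around `±2z` contains the whole `b`-neighbourhood of that segment.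
-/

open scoped RealInnerProductSpace

def rankOneUpdate (z : E) (b c : ℝ) : E →ₗ[ℝ] E :=
  b • LinearMap.id + c • (innerₛₗ ℝ z).smulRight z

@[simp]
lemma rankOneUpdate_apply (z x : E) (b c : ℝ) :
    rankOneUpdate z b c x = b • x + (c * ⟪z, x⟫) • z := by
  simp [rankOneUpdate, mul_smul]

lemma inner_rankOneUpdate (z x : E) (b c : ℝ) :
    ⟪z, rankOneUpdate z b c x⟫ = (b + c * ‖z‖ ^ 2) * ⟪z, x⟫ := by
  simp only [rankOneUpdate_apply, inner_add_right, real_inner_smul_right, real_inner_self_eq_norm_sq]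
  ring

lemma norm_rankOneUpdate_sq (z x : E) (b c : ℝ) :
    ‖rankOneUpdate z b c x‖ ^ 2 = b ^ 2 * ‖x‖ ^ 2 + c * (2 * b + c * ‖z‖ ^ 2) * ⟪z, x⟫ ^ 2 := by
  rw [rankOneUpdate_apply, norm_add_sq_real, norm_smul, norm_smul, inner_smul_left,
    inner_smul_right, real_inner_comm x z]
  simp only [Real.norm_eq_abs, mul_pow, sq_abs, conj_trivial]
  ring

lemma rankOneUpdate_comp (z : E) (b c b' c' : ℝ) :
    rankOneUpdate z b c ∘ₗ rankOneUpdate z b' c' =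
      rankOneUpdate z (b * b') (b * c' + c * (b' + c' * ‖z‖ ^ 2)) := by
  ext x
  rw [LinearMap.comp_apply, rankOneUpdate_apply z (rankOneUpdate z b' c' x), inner_rankOneUpdate]
  simp only [rankOneUpdate_apply]
  module

lemma rankOneUpdate_one_zero (z : E) : rankOneUpdate z 1 0 = LinearMap.id := by
  ext x
  simp

/-- The inverse is given by the Sherman–Morrison formula. -/
def rankOneUpdateEquiv (z : E) {b c : ℝ} (hb : b ≠ 0) (hbc : b + c * ‖z‖ ^ 2 ≠ 0) :
    E ≃ₗ[ℝ] E :=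
  .ofLinearMap (rankOneUpdate z b c) (rankOneUpdate z b⁻¹ (-c / (b * (b + c * ‖z‖ ^ 2))))
    (by rw [rankOneUpdate_comp, ← rankOneUpdate_one_zero z]; congr 1 <;> field_simp; ring)
    (by rw [rankOneUpdate_comp, ← rankOneUpdate_one_zero z]; congr 1 <;> field_simp; ring)

@[simp]
lemma rankOneUpdateEquiv_apply (z : E) {b c : ℝ} (hb : b ≠ 0) (hbc : b + c * ‖z‖ ^ 2 ≠ 0)
    (x : E) : rankOneUpdateEquiv z hb hbc x = rankOneUpdate z b c x :=
  rfl

@[simp]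
lemma rankOneUpdateEquiv_symm_apply (z : E) {b c : ℝ} (hb : b ≠ 0)
    (hbc : b + c * ‖z‖ ^ 2 ≠ 0) (x : E) :
    (rankOneUpdateEquiv z hb hbc).symm x =
      rankOneUpdate z b⁻¹ (-c / (b * (b + c * ‖z‖ ^ 2))) x :=
  rfl

lemma smul_add_mem_convexHull_closedBall_union {V : Type*} [SeminormedAddCommGroup V]
    [NormedSpace ℝ V] {w p : V} {m r : ℝ} (hm : |m| ≤ 1) (hp : ‖p‖ ≤ r) :
    m • w + p ∈ convexHull ℝ (closedBall w r ∪ closedBall (-w) r) := by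
  have hw : w + p ∈ closedBall w r ∪ closedBall (-w) r := .inl (by simpa using hp)
  have hnw : -w + p ∈ closedBall w r ∪ closedBall (-w) r := .inr (by simpa using hp)
  have hcomb : m • w + p = ((1 + m) / 2) • (w + p) + ((1 - m) / 2) • (-w + p) := by module
  rw [hcomb]
  exact convex_convexHull ℝ _ (subset_convexHull ℝ _ hw) (subset_convexHull ℝ _ hnw)
    (by linarith [neg_abs_le m]) (by linarith [le_abs_self m]) (by ring)

lemma add_two_div_add_mul_sq_eq {a b s : ℝ} (hab : a ^ 2 = b ^ 2 + 2 * s ^ 2) (hpos : 0 < a + b) :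
    b + 2 / (a + b) * s ^ 2 = a := by
  field_simp
  linear_combination -hab

section Ellipsoid

variable (z : E) {a b : ℝ} (ha : 0 < a) (hb : 0 < b)

/-- When `a² = b² + 2‖z‖²` this has eigenvalue `a` on `z` and `b` on `zᗮ`: the coefficient
`2 / (a + b)` is `(a - b) / ‖z‖²` written without dividing by `‖z‖`. -/
def ellipsoidEquiv : E ≃ₗ[ℝ] E :=
  rankOneUpdateEquiv z (c := 2 / (a + b)) hb.ne' (by positivity)

variable {z}

lemma norm_ellipsoidEquiv_sq (hab : a ^ 2 = b ^ 2 + 2 * ‖z‖ ^ 2) (x : E) :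
    ‖ellipsoidEquiv z ha hb x‖ ^ 2 = b ^ 2 * ‖x‖ ^ 2 + 2 * ⟪z, x⟫ ^ 2 := by
  have hpos : 0 < a + b := by positivity
  rw [ellipsoidEquiv, rankOneUpdateEquiv_apply, norm_rankOneUpdate_sq, two_mul b, add_assoc,
    add_two_div_add_mul_sq_eq hab hpos]
  field_simp
  ring

lemma inner_ellipsoidEquiv (hab : a ^ 2 = b ^ 2 + 2 * ‖z‖ ^ 2) (x : E) :
    ⟪z, ellipsoidEquiv z ha hb x⟫ = a * ⟪z, x⟫ := by
  rw [ellipsoidEquiv, rankOneUpdateEquiv_apply, inner_rankOneUpdate,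
    add_two_div_add_mul_sq_eq hab (by positivity)]

lemma norm_ellipsoidEquiv_symm_sq (hab : a ^ 2 = b ^ 2 + 2 * ‖z‖ ^ 2) (y : E) :
    a ^ 2 * b ^ 2 * ‖(ellipsoidEquiv z ha hb).symm y‖ ^ 2 = a ^ 2 * ‖y‖ ^ 2 - 2 * ⟪z, y⟫ ^ 2 := by
  have hpos : 0 < a + b := by positivity
  rw [ellipsoidEquiv, rankOneUpdateEquiv_symm_apply, norm_rankOneUpdate_sq,
    add_two_div_add_mul_sq_eq hab hpos]
  field_simp
  linear_combination (-2 * ⟪z, y⟫ ^ 2) * hab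

lemma mem_image_closedBall_ellipsoidEquiv (hab : a ^ 2 = b ^ 2 + 2 * ‖z‖ ^ 2) {y : E}
    (hy : a ^ 2 * ‖y‖ ^ 2 - 2 * ⟪z, y⟫ ^ 2 ≤ a ^ 2 * b ^ 2) :
    y ∈ ellipsoidEquiv z ha hb '' closedBall 0 1 := by
  rw [LinearEquiv.image_eq_preimage_symm, Set.mem_preimage, mem_closedBall_zero_iff,
    ← sq_le_one_iff₀ (norm_nonneg _)]
  have hab0 : 0 < a ^ 2 * b ^ 2 := by positivity
  nlinarith [norm_ellipsoidEquiv_symm_sq ha hb hab y]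

lemma closedBall_subset_image_ellipsoidEquiv (hab : a ^ 2 = b ^ 2 + 2 * ‖z‖ ^ 2) {t : ℝ}
    (hbt : b ^ 2 = 2 * t ^ 2) : closedBall z t ⊆ ellipsoidEquiv z ha hb '' closedBall 0 1 := by
  intro y hy
  obtain ⟨v, hv, rfl⟩ : ∃ v, ‖v‖ ≤ t ∧ z + v = y :=
    ⟨y - z, by rwa [← dist_eq_norm], add_sub_cancel z y⟩
  apply mem_image_closedBall_ellipsoidEquiv ha hb hab
  have hv2 : a ^ 2 * ‖v‖ ^ 2 ≤ a ^ 2 * t ^ 2 :=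
    mul_le_mul_of_nonneg_left (pow_le_pow_left₀ (norm_nonneg v) hv 2) (sq_nonneg a)
  rw [norm_add_sq_real, inner_add_right, real_inner_self_eq_norm_sq]
  -- at `‖v‖ = t` the slack is exactly `2 (t² - ⟪z, v⟫)²`
  linear_combination hv2 + 2 * sq_nonneg (t ^ 2 - ⟪z, v⟫) +
    (‖z‖ ^ 2 + 2 * ⟪z, v⟫ + t ^ 2 - b ^ 2) * hab - (b ^ 2 + t ^ 2 + ‖z‖ ^ 2 - 2 * ⟪z, v⟫) * hbt

lemma image_closedBall_ellipsoidEquiv_subset_convexHull (hab : a ^ 2 = b ^ 2 + 2 * ‖z‖ ^ 2) :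
    ellipsoidEquiv z ha hb '' closedBall 0 1 ⊆
      convexHull ℝ (closedBall ((2 : ℝ) • z) b ∪ closedBall (-((2 : ℝ) • z)) b) := by
  rintro _ ⟨u, hu, rfl⟩
  rw [mem_closedBall_zero_iff] at hu
  set m := ⟪z, u⟫ / a
  have hma : m * a = ⟪z, u⟫ := div_mul_cancel₀ _ ha.ne'
  have hm : |m| ≤ 1 := by
    have hza : ‖z‖ ≤ a := abs_le_of_sq_le_sq' (by nlinarith) ha.le |>.2
    rw [abs_div, abs_of_pos ha, div_le_one ha]
    calc |⟪z, u⟫| ≤ ‖z‖ * ‖u‖ := abs_real_inner_le_norm z u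
      _ ≤ ‖z‖ := mul_le_of_le_one_right (norm_nonneg z) hu
      _ ≤ a := hza
  have hp : ‖ellipsoidEquiv z ha hb u - m • (2 : ℝ) • z‖ ≤ b := by
    rw [← sq_le_sq₀ (norm_nonneg _) hb.le, norm_sub_sq_real, norm_ellipsoidEquiv_sq ha hb hab,
      real_inner_smul_right, real_inner_smul_right, real_inner_comm z, inner_ellipsoidEquiv ha hb hab,
      norm_smul, norm_smul, ← hma]
    simp only [Real.norm_eq_abs, mul_pow, sq_abs]
    have hu2 : b ^ 2 * ‖u‖ ^ 2 ≤ b ^ 2 :=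
      mul_le_of_le_one_right (sq_nonneg b) (pow_le_one₀ (norm_nonneg u) hu)
    linear_combination hu2 + 2 * sq_nonneg (m * b) + (-2 * m ^ 2) * hab
  simpa using smul_add_mem_convexHull_closedBall_union (w := (2 : ℝ) • z) hm hp

end Ellipsoid

/-- every ball `z + tB₂ⁿ` is contained in a centered ellipsoid contained in
`conv((2z + 2√2 t B₂ⁿ) ∪ (−2z + 2√2 t B₂ⁿ))`. -/
theorem exists_centered_ellipsoid_between (n : ℕ) (z : EuclideanSpace ℝ (Fin n)) (t : ℝ)
    (ht : 0 < t) :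
    ∃ T : EuclideanSpace ℝ (Fin n) ≃ₗ[ℝ] EuclideanSpace ℝ (Fin n),
      ({z} + t • Metric.closedBall (0 : EuclideanSpace ℝ (Fin n)) 1) ⊆
        T '' Metric.closedBall (0 : EuclideanSpace ℝ (Fin n)) 1 ∧
      T '' Metric.closedBall (0 : EuclideanSpace ℝ (Fin n)) 1 ⊆
        convexHull ℝ
          (({(2 : ℝ) • z} + (2 * Real.sqrt 2 * t) • Metric.closedBall (0 : EuclideanSpace ℝ (Fin n)) 1) ∪
           ({-((2 : ℝ) • z)} + (2 * Real.sqrt 2 * t) • Metric.closedBall (0 : EuclideanSpace ℝ (Fin n)) 1)) := by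
  set b := √2 * t
  set a := √(b ^ 2 + 2 * ‖z‖ ^ 2)
  have hb : 0 < b := by positivity
  have ha : 0 < a := Real.sqrt_pos.2 (by positivity)
  have hab : a ^ 2 = b ^ 2 + 2 * ‖z‖ ^ 2 := Real.sq_sqrt (by positivity)
  have hbt : b ^ 2 = 2 * t ^ 2 := by rw [mul_pow, Real.sq_sqrt zero_le_two]
  have hbr : b ≤ 2 * √2 * t := by nlinarith
  refine ⟨ellipsoidEquiv z ha hb, ?_, ?_⟩
  · rw [smul_unitClosedBall_of_nonneg ht.le, singleton_add_closedBall_zero]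
    exact closedBall_subset_image_ellipsoidEquiv ha hb hab hbt
  · rw [smul_unitClosedBall_of_nonneg (by positivity), singleton_add_closedBall_zero,
      singleton_add_closedBall_zero]
    refine (image_closedBall_ellipsoidEquiv_subset_convexHull ha hb hab).trans ?_
    exact convexHull_mono (Set.union_subset_union (closedBall_subset_closedBall hbr)
      (closedBall_subset_closedBall hbr))
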